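/- Suppose in every slot t the drift-plus-penalty satisfies L(Q(t+1)) - L(Q(t)) + V·T̃(t) ≤ B + V·T_max − ε·Q(t), with T̃(t) ≥ T_min, Q(1) = 0, Q(t) ≥ 0, ε > 0, V ≥ 0, B ≥ 0. Then the time-averaged queue backlog is bounded: (1/T) Σ_{t=1}^{T} Q(t) ≤ (B + V(T_max − T_min))/ε for all T ≥ 1. -/

import Mathlib

/-! Summing the drift inequality telescopes the Lyapunov function: since `L ≥ 0` and
`L (Q 1) = 0`, the accumulated penalty `ε ∑ Q t` is bounded by `T` times the per-slot
constant `B + V (T_max - T_min)`, and dividing by `ε T` gives the bound. -/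

open Finset

theorem add_sum_le_of_drift_le {f q : ℕ → ℝ} {C : ℝ}
    (hdrift : ∀ t ≥ 1, f (t + 1) - f t + q t ≤ C) {T : ℕ} (hT : 1 ≤ T) :
    f (T + 1) - f 1 + ∑ t ∈ Icc 1 T, q t ≤ T * C :=
  calc f (T + 1) - f 1 + ∑ t ∈ Icc 1 T, q t
      = ∑ t ∈ Icc 1 T, (f (t + 1) - f t + q t) := by rw [sum_add_distrib, sum_Icc_sub hT]
    _ ≤ ∑ _t ∈ Icc 1 T, C := sum_le_sum fun t ht => hdrift t (mem_Icc.1 ht).1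
    _ = T * C := by simp

theorem queue_backlog_bound_general
    (Q : ℕ → ℝ) (Tt : ℕ → ℝ) (B V ε Tmax Tmin : ℝ)
    (hQ1 : Q 1 = 0)
    (hV : V ≥ 0) (hε : ε > 0)
    (hTmin : ∀ t, Tt t ≥ Tmin)
    (L : ℝ → ℝ) (hL : ∀ q, L q = q ^ 2 / 2)
    (hdrift : ∀ t ≥ 1,
      L (Q (t + 1)) - L (Q t) + V * Tt t ≤ B + V * Tmax - ε * Q t) :
    ∀ T : ℕ, 1 ≤ T →
      (1 / (T : ℝ)) * ∑ t ∈ Finset.Icc 1 T, Q t ≤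
        (B + V * (Tmax - Tmin)) / ε := by
  intro T hT
  have hstep : ∀ t ≥ 1, L (Q (t + 1)) - L (Q t) + ε * Q t ≤ B + V * (Tmax - Tmin) :=
    fun t ht => by linarith [hdrift t ht, mul_le_mul_of_nonneg_left (hTmin t) hV]
  have hsum := add_sum_le_of_drift_le (f := fun t => L (Q t)) (q := fun t => ε * Q t) hstep hT
  rw [← mul_sum] at hsum
  have hL_last : 0 ≤ L (Q (T + 1)) := by rw [hL]; positivity
  have hL_first : L (Q 1) = 0 := by rw [hL, hQ1]; norm_num
  have hTpos : (0 : ℝ) < T := by exact_mod_cast hT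
  rw [one_div_mul_eq_div, div_le_div_iff₀ hTpos hε]
  linarith

theorem queue_backlog_bound
    (Q : ℕ → ℝ) (Tt : ℕ → ℝ) (B V ε Tmax Tmin : ℝ)
    (hQ1 : Q 1 = 0)
    (hQpos : ∀ t, Q t ≥ 0)
    (hB : B ≥ 0) (hV : V ≥ 0) (hε : ε > 0)
    (hTmin : ∀ t, Tt t ≥ Tmin)
    (L : ℝ → ℝ) (hL : ∀ q, L q = q ^ 2 / 2)
    (hdrift : ∀ t ≥ 1,
      L (Q (t + 1)) - L (Q t) + V * Tt t ≤ B + V * Tmax - ε * Q t) :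
    ∀ T : ℕ, 1 ≤ T →
      (1 / (T : ℝ)) * ∑ t ∈ Finset.Icc 1 T, Q t ≤
        (B + V * (Tmax - Tmin)) / ε :=
  queue_backlog_bound_general Q Tt B V ε Tmax Tmin hQ1 hV hε hTmin L hL hdrift
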